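/- The self-adjointness structure of $J_{1/2}$: for the parity operator $\mathcal{P}$ and $Q_{1/2} = \begin{pmatrix}\Delta & 2g(g-a)\\ 2g(g+a^\dagger) & \Delta\end{pmatrix}$ with real $g, \Delta$, the operator $J_{1/2} = (\mathcal{P}\otimes I)Q_{1/2}$ is symmetric with respect to the standard Hermitian inner product induced by $\langle x^n, x^m\rangle = n!\,\delta_{nm}$ on $\mathbb{C}[x]$ (extended to $\mathbb{C}[x]^2$ componentwise): $\langle J_{1/2} u, v\rangle = \langle u, J_{1/2} v\rangle$ for all $u, v \in \mathbb{C}[x]^2$. -/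

import Mathlib

open Polynomial

noncomputable section

/-- The space of operators on `ℂ[x]`. -/
abbrev E := Module.End ℂ (Polynomial ℂ)

/-- Annihilation operator `a = d/dx`. -/
def opA : E := Polynomial.derivative

/-- Creation operator `a† = ` multiplication by `x`. -/
def opC : E := LinearMap.mulLeft ℂ (X : Polynomial ℂ)

/-- Parity operator `(𝒫 f)(x) = f(-x)`. -/
def opP : E := (aeval (-X : Polynomial ℂ)).toLinearMap

/-- `2×2` matrices of operators, i.e. operators on `ℂ[x] ⊗ ℂ²`. -/
abbrev M2 := Matrix (Fin 2) (Fin 2) E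

/-- The asymmetric quantum Rabi Hamiltonian
`H^ε = a†a + Δ σx + g (a+a†) σz + ε σz`. -/
def Hop (g Δ ε : ℝ) : M2 :=
  !![opC * opA + (g : ℂ) • (opA + opC) + (ε : ℂ) • 1, (Δ : ℂ) • 1;
     (Δ : ℂ) • 1, opC * opA - (g : ℂ) • (opA + opC) - (ε : ℂ) • 1]

/-- The parity operator `𝒫 ⊗ I` on `ℂ[x] ⊗ ℂ²`. -/
def Pm : M2 := !![opP, 0; 0, opP]

end

noncomputable section

/-- The Bargmann–Fock inner product on `ℂ[x]`, determined by
`⟪xⁿ, xᵐ⟫ = n! δₙₘ` (antilinear in the first argument). -/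
def ip (f h : Polynomial ℂ) : ℂ :=
  ∑ n ∈ Finset.range (f.natDegree + h.natDegree + 1),
    (n.factorial : ℂ) * (starRingEnd ℂ) (f.coeff n) * h.coeff n

/-- The induced inner product on `ℂ[x]²`. -/
def ip2 (u v : Fin 2 → Polynomial ℂ) : ℂ := ∑ i, ip (u i) (v i)

/-- A `2×2` operator matrix acting on `ℂ[x]²`. -/
def act (Q : M2) (v : Fin 2 → Polynomial ℂ) : Fin 2 → Polynomial ℂ :=
  fun i => ∑ j, Q i j (v j)

/-- The matrix `Q_{1/2}` for `ε = 1/2`. -/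
def Q12 (g Δ : ℝ) : M2 :=
  !![(Δ : ℂ) • 1, (2 * g * g : ℂ) • 1 - (2 * g : ℂ) • opA;
     (2 * g * g : ℂ) • 1 + (2 * g : ℂ) • opC, (Δ : ℂ) • 1]

end

/-!
Real multiples of the identity and `𝒫` are self-adjoint and `a`, `a†` are mutually adjoint for
the Bargmann–Fock product, so the adjoint of an entry `𝒫 T` of `J_{1/2}` is `T† 𝒫`. As `𝒫`
anticommutes with `a` and `a†`, moving it to the left turns `T† 𝒫` for `T = 2g² - 2g a` into
`𝒫 (2g² + 2g a†)` and vice versa: the matrix of adjoints of the entries of `J_{1/2}` is its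
transpose, which is symmetry of `J_{1/2}` on `ℂ[x]²`.
-/

open LinearMap

lemma ip_eq_sum_range {f h : Polynomial ℂ} {N : ℕ} (hN : f.natDegree < N ∨ h.natDegree < N) :
    ip f h = ∑ n ∈ Finset.range N,
      (n.factorial : ℂ) * (starRingEnd ℂ) (f.coeff n) * h.coeff n := by
  have hvanish : ∀ n, f.natDegree < n ∨ h.natDegree < n →
      (n.factorial : ℂ) * (starRingEnd ℂ) (f.coeff n) * h.coeff n = 0 := by
    rintro n (hn | hn)
    · rw [f.coeff_eq_zero_of_natDegree_lt hn, map_zero, mul_zero, zero_mul]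
    · rw [h.coeff_eq_zero_of_natDegree_lt hn, mul_zero]
  unfold ip
  rcases le_total (f.natDegree + h.natDegree + 1) N with hle | hle
  · exact Finset.sum_subset (Finset.range_subset_range.2 hle) fun n _ hn =>
      hvanish n (by simp at hn; omega)
  · exact (Finset.sum_subset (Finset.range_subset_range.2 hle) fun n _ hn =>
      hvanish n (by simp at hn; omega)).symm

lemma ip_add_left (f₁ f₂ h : Polynomial ℂ) : ip (f₁ + f₂) h = ip f₁ h + ip f₂ h := by
  simp only [ip_eq_sum_range (N := h.natDegree + 1) (.inr h.natDegree.lt_succ_self),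
    ← Finset.sum_add_distrib, coeff_add, map_add, add_mul, mul_add]

lemma ip_smul_left (c : ℂ) (f h : Polynomial ℂ) :
    ip (c • f) h = (starRingEnd ℂ) c * ip f h := by
  simp only [ip_eq_sum_range (N := h.natDegree + 1) (.inr h.natDegree.lt_succ_self),
    Finset.mul_sum, coeff_smul, smul_eq_mul, map_mul]
  exact Finset.sum_congr rfl fun _ _ => by ring

lemma ip_add_right (f h₁ h₂ : Polynomial ℂ) : ip f (h₁ + h₂) = ip f h₁ + ip f h₂ := by
  simp only [ip_eq_sum_range (N := f.natDegree + 1) (.inl f.natDegree.lt_succ_self),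
    ← Finset.sum_add_distrib, coeff_add, mul_add]

lemma ip_smul_right (c : ℂ) (f h : Polynomial ℂ) : ip f (c • h) = c * ip f h := by
  simp only [ip_eq_sum_range (N := f.natDegree + 1) (.inl f.natDegree.lt_succ_self),
    Finset.mul_sum, coeff_smul, smul_eq_mul]
  exact Finset.sum_congr rfl fun _ _ => by ring

lemma conj_ip (f h : Polynomial ℂ) : (starRingEnd ℂ) (ip f h) = ip h f := by
  simp only [ip_eq_sum_range (N := f.natDegree + 1) (.inl f.natDegree.lt_succ_self),
    ip_eq_sum_range (N := f.natDegree + 1) (.inr f.natDegree.lt_succ_self), map_sum, map_mul,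
    Complex.conj_conj, map_natCast]
  exact Finset.sum_congr rfl fun _ _ => by ring

/-- `ip` with its arguments swapped, so that it is linear in the first one as
`LinearMap.IsAdjointPair` requires; `IsAdjointPair ipForm ipForm T S` then says
`ip (S y) x = ip y (T x)`, i.e. `S = T†`. -/
noncomputable def ipForm : Polynomial ℂ →ₗ[ℂ] Polynomial ℂ →ₗ⋆[ℂ] ℂ :=
  mk₂'ₛₗ _ _ (fun f h => ip h f) (fun _ _ _ => ip_add_right _ _ _)
    (fun _ _ _ => ip_smul_right _ _ _) (fun _ _ _ => ip_add_left _ _ _)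
    (fun _ _ _ => ip_smul_left _ _ _)

lemma ipForm_apply (f h : Polynomial ℂ) : ipForm f h = ip h f := rfl

namespace LinearMap.IsAdjointPair

variable {R M M₁ M₂ : Type*} [CommRing R] [AddCommGroup M] [Module R M]
  [AddCommGroup M₁] [Module R M₁] [AddCommGroup M₂] [Module R M₂] {I : R →+* R}
  {B : M →ₗ[R] M →ₛₗ[I] M₂} {B' : M₁ →ₗ[R] M₁ →ₛₗ[I] M₂} {f f' : M → M₁} {g g' : M₁ → M}

theorem sub' (h : IsAdjointPair B B' f g) (h' : IsAdjointPair B B' f' g') :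
    IsAdjointPair B B' (f - f') (g - g') := fun x _ ↦ by
  rw [Pi.sub_apply, Pi.sub_apply, B'.map_sub₂, (B x).map_sub, h, h']

theorem smul_of_map_eq {c : R} (hc : I c = c) (h : IsAdjointPair B B' f g) :
    IsAdjointPair B B' (c • f) (c • g) := fun x y ↦ by
  rw [Pi.smul_apply, Pi.smul_apply, B'.map_smul₂, map_smulₛₗ, hc, h]

end LinearMap.IsAdjointPair

lemma coeff_opP (f : Polynomial ℂ) (n : ℕ) : (opP f).coeff n = (-1) ^ n * f.coeff n := by
  induction f using Polynomial.induction_on' with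
  | add p q hp hq => simp only [map_add, coeff_add, hp, hq, mul_add]
  | monomial k c =>
    simp only [opP, AlgHom.toLinearMap_apply, aeval_monomial, coeff_monomial]
    rw [neg_pow, ← C_eq_algebraMap, ← C_1, ← C_neg, ← C_pow, ← mul_assoc, ← C_mul,
      coeff_C_mul, coeff_X_pow]
    rcases eq_or_ne k n with rfl | hkn
    · simp [mul_comm]
    · simp [hkn, Ne.symm hkn]

lemma ip_opP (f h : Polynomial ℂ) : ip (opP f) h = ip f (opP h) := by
  rw [ip_eq_sum_range (N := f.natDegree + h.natDegree + 1) (.inr (by omega)),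
    ip_eq_sum_range (N := f.natDegree + h.natDegree + 1) (.inl (by omega))]
  refine Finset.sum_congr rfl fun n _ => ?_
  rw [coeff_opP, coeff_opP, map_mul, map_pow, map_neg, map_one]
  ring

lemma ip_derivative (f h : Polynomial ℂ) : ip (derivative f) h = ip f (X * h) := by
  rw [ip_eq_sum_range (N := f.natDegree + 1)
        (.inl (f.natDegree_derivative_le.trans_lt (by omega))),
      ip_eq_sum_range (N := f.natDegree + 2) (.inl (by omega)),
      Finset.sum_range_succ' _ (f.natDegree + 1), coeff_X_mul_zero, mul_zero, add_zero]
  refine Finset.sum_congr rfl fun n _ => ?_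
  rw [coeff_derivative, coeff_X_mul, map_mul, Nat.factorial_succ]
  push_cast
  rw [map_add, map_natCast, map_one]
  ring

lemma ip_X_mul (f h : Polynomial ℂ) : ip (X * f) h = ip f (derivative h) := by
  rw [← conj_ip, ← ip_derivative, conj_ip]

lemma opC_mul_opP : opC * opP = -(opP * opC) := by
  refine LinearMap.ext fun h => ?_
  simp only [Module.End.mul_apply, LinearMap.neg_apply, opC, LinearMap.mulLeft_apply, opP,
    AlgHom.toLinearMap_apply, map_mul, aeval_X, neg_mul, neg_neg]

lemma opA_mul_opP : opA * opP = -(opP * opA) := by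
  refine LinearMap.ext fun h => ?_
  change derivative (opP h) = -opP (derivative h)
  ext n
  rw [coeff_derivative, coeff_opP, coeff_neg, coeff_opP, coeff_derivative, pow_succ]
  ring

lemma smul_one_sub_smul_opC_mul_opP (a b : ℂ) :
    (a • 1 - b • opC) * opP = opP * (a • 1 + b • opC) := by
  rw [sub_mul, mul_add, smul_one_mul, mul_smul_one, smul_mul_assoc, mul_smul_comm, opC_mul_opP,
    smul_neg, sub_neg_eq_add]

lemma smul_one_add_smul_opA_mul_opP (a b : ℂ) :
    (a • 1 + b • opA) * opP = opP * (a • 1 - b • opA) := by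
  rw [add_mul, mul_sub, smul_one_mul, mul_smul_one, smul_mul_assoc, mul_smul_comm, opA_mul_opP,
    smul_neg, sub_eq_add_neg]

lemma isAdjointPair_opP : IsAdjointPair ipForm ipForm opP opP :=
  fun f h => (ip_opP h f).symm

lemma isAdjointPair_opA_opC : IsAdjointPair ipForm ipForm opA opC :=
  fun f h => (ip_X_mul h f).symm

lemma isAdjointPair_opC_opA : IsAdjointPair ipForm ipForm opC opA :=
  fun f h => (ip_derivative h f).symm

lemma isAdjointPair_smul_one {c : ℂ} (hc : starRingEnd ℂ c = c) :
    IsAdjointPair ipForm ipForm ⇑(c • 1 : E) ⇑(c • 1 : E) :=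
  isAdjointPair_one.smul_of_map_eq hc

lemma isAdjointPair_opP_mul {T S S' : E} (h : IsAdjointPair ipForm ipForm T S)
    (hS : S * opP = opP * S') : IsAdjointPair ipForm ipForm ⇑(opP * T) ⇑(opP * S') :=
  hS ▸ isAdjointPair_opP.mul h

lemma Pm_mul_apply (Q : M2) (i j : Fin 2) : (Pm * Q) i j = opP * Q i j := by
  fin_cases i <;> simp [Pm, Matrix.mul_apply, Fin.sum_univ_two]

lemma ip2_act_eq_of_isAdjointPair {Q : M2}
    (hQ : ∀ i j, IsAdjointPair ipForm ipForm (Q i j) (Q j i)) (u v : Fin 2 → Polynomial ℂ) :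
    ip2 (act Q u) v = ip2 u (act Q v) := by
  simp only [ip2, act, Fin.sum_univ_two, ← ipForm_apply, map_add, LinearMap.add_apply]
  rw [hQ 0 0, hQ 0 1, hQ 1 0, hQ 1 1]
  ring

/-- the operator `J_{1/2} = (𝒫 ⊗ I) Q_{1/2}` with real `g, Δ` is
symmetric with respect to the Bargmann–Fock inner product on `ℂ[x]²`. -/
theorem J12_symmetric (g Δ : ℝ) (u v : Fin 2 → Polynomial ℂ) :
    ip2 (act (Pm * Q12 g Δ) u) v = ip2 u (act (Pm * Q12 g Δ) v) := by
  have hΔ := isAdjointPair_smul_one (c := Δ) (by simp)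
  have hg2 := isAdjointPair_smul_one (c := 2 * g * g) (by simp [map_ofNat])
  have hgA := isAdjointPair_opA_opC.smul_of_map_eq (c := 2 * (g : ℂ)) (by simp [map_ofNat])
  have hgC := isAdjointPair_opC_opA.smul_of_map_eq (c := 2 * (g : ℂ)) (by simp [map_ofNat])
  refine ip2_act_eq_of_isAdjointPair (Fin.forall_fin_two.2
    ⟨Fin.forall_fin_two.2 ⟨?_, ?_⟩, Fin.forall_fin_two.2 ⟨?_, ?_⟩⟩) u v <;>
  simp only [Pm_mul_apply, Q12, Matrix.of_apply, Matrix.cons_val', Matrix.cons_val_zero,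
    Matrix.cons_val_one, Matrix.empty_val', Matrix.cons_val_fin_one]
  · exact isAdjointPair_opP_mul hΔ (by rw [smul_one_mul, mul_smul_one])
  · exact isAdjointPair_opP_mul (S := (2 * g * g : ℂ) • 1 - (2 * g : ℂ) • opC) (hg2.sub' hgA)
      (smul_one_sub_smul_opC_mul_opP _ _)
  · exact isAdjointPair_opP_mul (S := (2 * g * g : ℂ) • 1 + (2 * g : ℂ) • opA) (hg2.add hgC)
      (smul_one_add_smul_opA_mul_opP _ _)
  · exact isAdjointPair_opP_mul hΔ (by rw [smul_one_mul, mul_smul_one])
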